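/- If a query graph Q is isomorphic to a pattern p ∈ P, then every match of Q in G is entirely contained in the pattern-induced subgraph G[P]; hence evaluating Q over G[P] yields exactly the same set of matches as evaluating Q over G. -/

import Mathlib

/-- A pattern is a graph on some vertex type. -/
abbrev Pattern := Σ W : Type, SimpleGraph W

/-- The pattern-induced subgraph `G[P]`: the union, over patterns `p ∈ P` and
homomorphic matches `φ` of `p` into `G`, of the vertices and edges of the match. -/
def patternInduced {V : Type} (G : SimpleGraph V) (P : Set Pattern) : G.Subgraph where
  verts := {v | ∃ p ∈ P, ∃ φ : p.2 →g G, v ∈ Set.range φ}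
  Adj := fun u v => ∃ p ∈ P, ∃ φ : p.2 →g G, ∃ a b, p.2.Adj a b ∧ φ a = u ∧ φ b = v
  adj_sub := by
    rintro u v ⟨p, hp, φ, a, b, hab, rfl, rfl⟩
    exact φ.map_adj hab
  edge_vert := by
    rintro u v ⟨p, hp, φ, a, b, hab, rfl, rfl⟩
    exact ⟨p, hp, φ, a, rfl⟩
  symm := by
    constructor
    rintro u v ⟨p, hp, φ, a, b, hab, rfl, rfl⟩
    exact ⟨p, hp, φ, b, a, hab.symm, rfl, rfl⟩

/-! A match of `Q` is an isomorphic copy of a match of `p`, and every match of a pattern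
`p ∈ P` lies in `G[P]` by definition. Since `G[P]` is a subgraph of `G`, matches into
`G[P]` correspond injectively to matches into `G`, and the containment shows that every
match into `G` arises this way. -/

namespace SimpleGraph.Subgraph

variable {V W : Type*} {G : SimpleGraph V} {Q : SimpleGraph W}

theorem hom_comp_injective (H : G.Subgraph) :
    Function.Injective (fun f : Q →g H.coe => H.hom.comp f) :=
  fun _ _ hfg => RelHom.ext fun u => H.hom_injective (DFunLike.congr_fun hfg u)

theorem hom_comp_surjective_of_forall_le (H : G.Subgraph)
    (hle : ∀ ψ : Q →g G, Set.range ψ ⊆ H.verts ∧ ∀ u v, Q.Adj u v → H.Adj (ψ u) (ψ v)) :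
    Function.Surjective (fun f : Q →g H.coe => H.hom.comp f) := fun ψ =>
  ⟨⟨fun u => ⟨ψ u, (hle ψ).1 ⟨u, rfl⟩⟩, fun {u v} huv => (hle ψ).2 u v huv⟩, rfl⟩

end SimpleGraph.Subgraph

section PatternInduced

variable {V : Type} {G : SimpleGraph V} {P : Set Pattern} {p : Pattern}

theorem mem_patternInduced_verts (hp : p ∈ P) (φ : p.2 →g G) (a : p.1) :
    φ a ∈ (patternInduced G P).verts :=
  ⟨p, hp, φ, a, rfl⟩

theorem patternInduced_adj (hp : p ∈ P) (φ : p.2 →g G) {a b : p.1} (hab : p.2.Adj a b) :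
    (patternInduced G P).Adj (φ a) (φ b) :=
  ⟨p, hp, φ, a, b, hab, rfl, rfl⟩

theorem match_le_patternInduced_of_iso {W : Type} {Q : SimpleGraph W} (hp : p ∈ P)
    (e : Q ≃g p.2) (ψ : Q →g G) :
    Set.range ψ ⊆ (patternInduced G P).verts ∧
      ∀ u v, Q.Adj u v → (patternInduced G P).Adj (ψ u) (ψ v) := by
  let φ : p.2 →g G := ψ.comp e.symm.toHom
  have hφ : ∀ u, φ (e u) = ψ u := fun u => by simp [φ]
  refine ⟨?_, fun u v huv => ?_⟩
  · rintro _ ⟨u, rfl⟩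
    exact hφ u ▸ mem_patternInduced_verts hp φ (e u)
  · simpa only [hφ] using patternInduced_adj hp φ (e.map_adj_iff.mpr huv)

end PatternInduced

/-- If a query graph `Q` is isomorphic to a pattern `p ∈ P`, then every match of
`Q` in `G` is entirely contained in `G[P]`; hence the matches of `Q` over
`G[P]` (via the inclusion homomorphism) are exactly the matches of `Q` over `G`. -/
theorem matches_contained_of_iso_pattern {V W : Type} (G : SimpleGraph V)
    (P : Set Pattern) (Q : SimpleGraph W) (p : Pattern) (hp : p ∈ P)
    (hiso : Nonempty (Q ≃g p.2)) :
    (∀ ψ : Q →g G, Set.range ψ ⊆ (patternInduced G P).verts ∧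
      ∀ u v, Q.Adj u v → (patternInduced G P).Adj (ψ u) (ψ v)) ∧
    Function.Bijective
      (fun f : Q →g (patternInduced G P).coe => (patternInduced G P).hom.comp f) := by
  obtain ⟨e⟩ := hiso
  have hle := match_le_patternInduced_of_iso hp e (G := G)
  exact ⟨hle, (patternInduced G P).hom_comp_injective,
    (patternInduced G P).hom_comp_surjective_of_forall_le hle⟩
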